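/- arXiv:1406.7166 — 3 statements merged into one kernel-verified Lean document; each statement's English description precedes it below -/
import Mathlib

section
/- In a DP-chain A whose coatom c satisfies c > 0, the coatom is the unique negation fixpoint: ¬c = c, where ¬x := x ⇒ 0, and no other element x satisfies ¬x = x. -/
/-- A DP-chain: an MTL-chain (linearly ordered, bounded, integral, commutative
residuated lattice) with a coatom, in which `x * x = 0` for all `x < 1`. -/
structure DPChain (α : Type*) [LinearOrder α] [Zero α] [One α] where
  zero_le : ∀ x : α, 0 ≤ x
  le_one : ∀ x : α, x ≤ 1
  mul : α → α → α
  imp : α → α → α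
  mul_comm : ∀ x y, mul x y = mul y x
  mul_assoc : ∀ x y z, mul (mul x y) z = mul x (mul y z)
  mul_one : ∀ x, mul x 1 = x
  mul_le_mul : ∀ x y z : α, x ≤ y → mul x z ≤ mul y z
  residuation : ∀ x y z : α, mul x y ≤ z ↔ x ≤ imp y z
  coatom : α
  coatom_lt_one : coatom < 1
  le_coatom : ∀ x : α, x < 1 → x ≤ coatom
  mul_self_eq_zero : ∀ x : α, x < 1 → mul x x = 0

namespace DPChain

variable {α : Type*} [LinearOrder α] [Zero α] [One α] (M : DPChain α)

theorem one_mul (x : α) : M.mul 1 x = x := by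
  rw [M.mul_comm, M.mul_one]

theorem mul_le_mul_left {x y : α} (h : x ≤ y) (z : α) : M.mul z x ≤ M.mul z y := by
  rw [M.mul_comm z x, M.mul_comm z y]
  exact M.mul_le_mul x y z h

theorem one_le_imp_iff {x y : α} : 1 ≤ M.imp x y ↔ x ≤ y := by
  rw [← M.residuation, M.one_mul]

theorem imp_zero_lt_one {x : α} (hx : 0 < x) : M.imp x 0 < 1 := by
  rw [lt_iff_not_ge, M.one_le_imp_iff]
  exact not_le.mpr hx

theorem coatom_le_imp_zero {x : α} (hx : x < 1) : M.coatom ≤ M.imp x 0 := by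
  rw [← M.residuation, ← M.mul_self_eq_zero _ M.coatom_lt_one]
  exact M.mul_le_mul_left (M.le_coatom x hx) _

end DPChain

/-- In a DP-chain whose coatom is positive, the coatom is the unique negation
fixpoint. -/
theorem dpChain_coatom_unique_negation_fixpoint {α : Type*} [LinearOrder α] [Zero α] [One α]
    (M : DPChain α) (hc : 0 < M.coatom) :
    M.imp M.coatom 0 = M.coatom ∧
    ∀ x : α, M.imp x 0 = x → x = M.coatom := by
  refine ⟨le_antisymm (M.le_coatom _ (M.imp_zero_lt_one hc))
    (M.coatom_le_imp_zero M.coatom_lt_one), fun x hx => ?_⟩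
  have hx_lt_one : x < 1 := by
    refine (M.le_one x).lt_of_ne fun hx_one => ?_
    subst hx_one
    exact (M.imp_zero_lt_one (hc.trans M.coatom_lt_one)).ne hx
  exact le_antisymm (M.le_coatom x hx_lt_one) (hx ▸ M.coatom_le_imp_zero hx_lt_one)
end

section
/- An MTL-chain satisfies (x ∨ ¬(x*x)) = 1 for all x (the weakened excluded middle identity axiomatizing DP) if and only if it is trivial, or it is the two-element chain, or it has a coatom and satisfies x * x = 0 for all x < 1. -/
/-- An MTL-chain: a linearly ordered, bounded, integral, commutative
residuated lattice. -/
structure MTLChain (α : Type*) [LinearOrder α] [Zero α] [One α] where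
  zero_le : ∀ x : α, 0 ≤ x
  le_one : ∀ x : α, x ≤ 1
  mul : α → α → α
  imp : α → α → α
  mul_comm : ∀ x y, mul x y = mul y x
  mul_assoc : ∀ x y z, mul (mul x y) z = mul x (mul y z)
  mul_one : ∀ x, mul x 1 = x
  mul_le_mul : ∀ x y z : α, x ≤ y → mul x z ≤ mul y z
  residuation : ∀ x y z : α, mul x y ≤ z ↔ x ≤ imp y z

/-!
The law `x ∨ ¬(x * x) = 1` holds at `x` exactly when `x = 1` or `x * x = 0`, so it says that every
element below `1` squares to `0`. In such a chain any `0 < a < 1` gives a coatom `¬a`: for `x < 1`,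
`x * a ≤ m * m = 0` with `m = max x a < 1`, i.e. `x ≤ ¬a`, while `¬a < 1` because `a ≠ 0`.
-/

namespace MTLChain

variable {α : Type*} [LinearOrder α] [Zero α] [One α]

theorem subsingleton_of_zero_eq_one (M : MTLChain α) (h : (0 : α) = 1) : Subsingleton α :=
  ⟨fun x y => le_antisymm ((M.le_one x).trans (h.symm.trans_le (M.zero_le y)))
    ((M.le_one y).trans (h.symm.trans_le (M.zero_le x)))⟩

variable (M : MTLChain α)

theorem one_mul (x : α) : M.mul 1 x = x := by
  rw [M.mul_comm, M.mul_one]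

theorem mul_le_mul' {x x' y y' : α} (hx : x ≤ x') (hy : y ≤ y') : M.mul x y ≤ M.mul x' y' :=
  calc M.mul x y ≤ M.mul x' y := M.mul_le_mul x x' y hx
    _ = M.mul y x' := M.mul_comm x' y
    _ ≤ M.mul y' x' := M.mul_le_mul y y' x' hy
    _ = M.mul x' y' := M.mul_comm y' x'

theorem mul_zero (x : α) : M.mul x 0 = 0 :=
  le_antisymm (by simpa only [M.one_mul] using M.mul_le_mul x 1 0 (M.le_one x)) (M.zero_le _)

theorem imp_eq_one_iff {y z : α} : M.imp y z = 1 ↔ y ≤ z := by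
  rw [← (M.le_one _).ge_iff_eq, ← M.residuation, M.one_mul]

theorem imp_zero_eq_one_iff {y : α} : M.imp y 0 = 1 ↔ y = 0 := by
  rw [imp_eq_one_iff, (M.zero_le y).ge_iff_eq']

theorem max_imp_mul_self_zero_eq_one_iff (x : α) :
    max x (M.imp (M.mul x x) 0) = 1 ↔ x = 1 ∨ M.mul x x = 0 := by
  rw [← M.imp_zero_eq_one_iff]
  constructor
  · intro h
    rcases max_choice x (M.imp (M.mul x x) 0) with hmax | hmax <;> rw [hmax] at h
    exacts [Or.inl h, Or.inr h]
  · rintro (h | h) <;> rw [h]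
    exacts [max_eq_left (M.le_one _), max_eq_right (M.le_one x)]

theorem forall_max_imp_mul_self_zero_eq_one_iff :
    (∀ x : α, max x (M.imp (M.mul x x) 0) = 1) ↔ ∀ x : α, x < 1 → M.mul x x = 0 :=
  forall_congr' fun x => by
    rw [M.max_imp_mul_self_zero_eq_one_iff, or_iff_not_imp_left, (M.le_one x).lt_iff_ne]

theorem exists_coatom_of_mul_self_eq_zero (h : ∀ x : α, x < 1 → M.mul x x = 0) {a : α}
    (ha0 : a ≠ 0) (ha1 : a < 1) : ∃ c : α, c < 1 ∧ ∀ x : α, x < 1 → x ≤ c := by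
  refine ⟨M.imp a 0, (M.le_one _).lt_of_ne (mt M.imp_zero_eq_one_iff.mp ha0), fun x hx => ?_⟩
  have hxa : M.mul x a ≤ 0 :=
    calc M.mul x a ≤ M.mul (max x a) (max x a) :=
          M.mul_le_mul' (le_max_left x a) (le_max_right x a)
      _ = 0 := h _ (max_lt hx ha1)
  exact (M.residuation x a 0).mp hxa

end MTLChain

/-- An MTL-chain satisfies the weakened excluded middle law
`x ∨ ¬(x*x) = 1` iff it is trivial, or the two-element chain, or it has a
coatom and satisfies `x * x = 0` for all `x < 1`. -/
theorem mtlChain_weak_em_characterization {α : Type*} [LinearOrder α] [Zero α] [One α]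
    (M : MTLChain α) :
    (∀ x : α, max x (M.imp (M.mul x x) 0) = 1) ↔
      Subsingleton α ∨
      ((0 : α) ≠ 1 ∧ ∀ x : α, x = 0 ∨ x = 1) ∨
      ((∃ c : α, c < 1 ∧ ∀ x : α, x < 1 → x ≤ c) ∧
        ∀ x : α, x < 1 → M.mul x x = 0) := by
  rw [M.forall_max_imp_mul_self_zero_eq_one_iff]
  constructor
  · intro h
    by_cases h01 : (0 : α) = 1
    · exact Or.inl (M.subsingleton_of_zero_eq_one h01)
    by_cases htwo : ∀ x : α, x = 0 ∨ x = 1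
    · exact Or.inr (Or.inl ⟨h01, htwo⟩)
    push Not at htwo
    obtain ⟨a, ha0, ha1⟩ := htwo
    exact Or.inr (Or.inr
      ⟨M.exists_coatom_of_mul_self_eq_zero h ha0 ((M.le_one a).lt_of_ne ha1), h⟩)
  · rintro (hs | ⟨-, htwo⟩ | ⟨-, h⟩) x hx
    · exact absurd (Subsingleton.elim x 1) hx.ne
    · obtain rfl := (htwo x).resolve_right hx.ne
      exact M.mul_zero 0
    · exact h x hx
end

section
/- Every finite DP-chain embeds into any infinite DP-chain: if B is a finite DP-chain and A is an infinite DP-chain, then there exists an injective map B → A preserving 0, 1, *, ⇒, and the order. -/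
namespace DPChain

section Chain

variable {γ : Type*} [LinearOrder γ] [Zero γ] [One γ]

lemma lt_one_of_ne (C : DPChain γ) {x : γ} (hx : x ≠ 1) : x < 1 :=
  (C.le_one x).lt_of_ne hx

lemma zero_lt_one (C : DPChain γ) : (0 : γ) < 1 :=
  (C.zero_le _).trans_lt C.coatom_lt_one

variable (C : DPChain γ)

lemma one_mul_s10 (x : γ) : C.mul 1 x = x := by
  rw [C.mul_comm, C.mul_one]

lemma mul_eq_zero_of_lt_one {x y : γ} (hx : x < 1) (hy : y < 1) : C.mul x y = 0 := by
  refine le_antisymm ?_ (C.zero_le _)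
  rcases le_total x y with h | h
  · calc C.mul x y ≤ C.mul y y := C.mul_le_mul x y y h
      _ = 0 := C.mul_self_eq_zero y hy
  · calc C.mul x y = C.mul y x := C.mul_comm x y
      _ ≤ C.mul x x := C.mul_le_mul y x x h
      _ = 0 := C.mul_self_eq_zero x hx

lemma mul_eq_ite (x y : γ) :
    C.mul x y = if x = 1 then y else if y = 1 then x else 0 := by
  split_ifs with hx hy
  · rw [hx, C.one_mul_s10]
  · rw [hy, C.mul_one]
  · exact C.mul_eq_zero_of_lt_one (C.lt_one_of_ne hx) (C.lt_one_of_ne hy)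

lemma imp_eq_one_iff {x y : γ} : C.imp x y = 1 ↔ x ≤ y := by
  rw [← (C.le_one _).ge_iff_eq, ← C.residuation, C.one_mul_s10]

lemma one_imp (y : γ) : C.imp 1 y = y :=
  le_antisymm (by simpa [C.mul_one] using (C.residuation (C.imp 1 y) 1 y).mpr le_rfl)
    ((C.residuation y 1 y).mp (C.mul_one y).le)

lemma imp_eq_coatom {x y : γ} (hyx : y < x) (hx : x < 1) : C.imp x y = C.coatom := by
  refine le_antisymm (C.le_coatom _ ?_) ((C.residuation _ _ _).mp ?_)
  · exact C.lt_one_of_ne (mt C.imp_eq_one_iff.mp hyx.not_ge)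
  · rw [C.mul_eq_zero_of_lt_one C.coatom_lt_one hx]
    exact C.zero_le y

lemma imp_eq_ite (x y : γ) :
    C.imp x y = if x ≤ y then 1 else if x = 1 then y else C.coatom := by
  split_ifs with h hx
  · exact C.imp_eq_one_iff.mpr h
  · rw [hx, C.one_imp]
  · exact C.imp_eq_coatom (not_le.mp h) (C.lt_one_of_ne hx)

lemma Ioo_zero_coatom_infinite [Infinite γ] : (Set.Ioo 0 C.coatom).Infinite := by
  refine (Set.infinite_univ.sdiff (Set.toFinite {0, C.coatom, 1})).mono ?_
  rintro x ⟨-, hx⟩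
  simp only [Set.mem_insert_iff, Set.mem_singleton_iff, not_or] at hx
  obtain ⟨h0, hc, h1⟩ := hx
  exact ⟨(C.zero_le x).lt_of_ne' h0, (C.le_coatom x (C.lt_one_of_ne h1)).lt_of_ne hc⟩

end Chain

variable {α β : Type*} [LinearOrder α] [Zero α] [One α] [LinearOrder β] [Zero β] [One β]
  {A : DPChain α} {B : DPChain β} {f : β → α}

lemma map_mul_of_strictMono (hf : StrictMono f) (h0 : f 0 = 0) (h1 : f 1 = 1) (x y : β) :
    f (B.mul x y) = A.mul (f x) (f y) := by
  simp only [B.mul_eq_ite, A.mul_eq_ite, hf.injective.eq_iff' h1]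
  split_ifs <;> simp [h0]

/-- When `c_B = 0` the coatom is never a value of `⇒` below `1`, so it need not be preserved. -/
lemma map_imp_of_strictMono (hf : StrictMono f) (h1 : f 1 = 1)
    (hc : B.coatom ≠ 0 → f B.coatom = A.coatom) (x y : β) :
    f (B.imp x y) = A.imp (f x) (f y) := by
  simp only [B.imp_eq_ite, A.imp_eq_ite, hf.injective.eq_iff' h1, hf.le_iff_le]
  split_ifs with hxy hx
  · exact h1
  · rfl
  · refine hc (ne_of_gt ?_)
    exact (B.zero_le y).trans_lt ((not_le.mp hxy).trans_le (B.le_coatom x (B.lt_one_of_ne hx)))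

variable (A B)

lemma exists_strictMono_map_zero_one_coatom [Finite β] [Infinite α] :
    ∃ f : β → α, StrictMono f ∧ f 0 = 0 ∧ f 1 = 1 ∧ (B.coatom ≠ 0 → f B.coatom = A.coatom) := by
  have := A.Ioo_zero_coatom_infinite.to_subtype
  obtain ⟨g⟩ := nonempty_orderEmbedding_of_finite_infinite β (Set.Ioo 0 A.coatom)
  refine ⟨fun x => if x = 1 then 1 else if x = 0 then 0 else if x = B.coatom then A.coatom
    else g x, ?_, by simp [B.zero_lt_one.ne], by simp, fun hc => by simp [B.coatom_lt_one.ne, hc]⟩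
  intro x y hxy
  have hg_mem := fun x => (g x).2
  have hgm : (g x : α) < g y := g.strictMono hxy
  have hx1 : x ≠ 1 := (hxy.trans_le (B.le_one y)).ne
  have hy0 : y ≠ 0 := ((B.zero_le x).trans_lt hxy).ne'
  have hyc : y ≠ 1 → y ≤ B.coatom := fun h => B.le_coatom y (B.lt_one_of_ne h)
  have hA := A.coatom_lt_one
  dsimp only
  split_ifs <;> grind

end DPChain

/-- Every finite DP-chain embeds into any infinite DP-chain. -/
theorem finite_dpChain_embeds_into_infinite
    {α β : Type*} [LinearOrder α] [Zero α] [One α] [LinearOrder β] [Zero β] [One β]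
    [Finite β] [Infinite α]
    (A : DPChain α) (B : DPChain β) :
    ∃ f : β → α,
      Function.Injective f ∧
      f 0 = 0 ∧ f 1 = 1 ∧
      StrictMono f ∧
      (∀ x y : β, f (B.mul x y) = A.mul (f x) (f y)) ∧
      (∀ x y : β, f (B.imp x y) = A.imp (f x) (f y)) := by
  obtain ⟨f, hf, h0, h1, hc⟩ := A.exists_strictMono_map_zero_one_coatom B
  exact ⟨f, hf.injective, h0, h1, hf, DPChain.map_mul_of_strictMono hf h0 h1,
    DPChain.map_imp_of_strictMono hf h1 hc⟩
end
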